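/- arXiv:2303.02208 — 3 statements merged into one kernel-verified Lean document; each statement's English description precedes it below -/
import Mathlib

section
/- For the Pell equation x² − 19y² = 1, the identity y_{2ℓ+1} = (3x_ℓ + 13y_ℓ)(13x_ℓ + 57y_ℓ) holds for every ℓ ∈ ℕ. -/
/-- The standard Pell sequence for d = 19: (X n, Y n) with fundamental (170, 39). -/
def pellXY : ℕ → ℕ × ℕ
  | 0 => (1, 0)
  | n + 1 => (170 * (pellXY n).1 + 741 * (pellXY n).2,
              39 * (pellXY n).1 + 170 * (pellXY n).2)

lemma pellXY_sol (n : ℕ) : (pellXY n).1 ^ 2 = 19 * (pellXY n).2 ^ 2 + 1 := by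
  induction n with
  | zero => simp [pellXY]
  | succ n ih =>
      simp only [pellXY]
      nlinarith [ih]

lemma pellXY_pos (n : ℕ) : 1 ≤ (pellXY n).1 := by
  have h := pellXY_sol n
  nlinarith [h]

lemma pellXY_mono : StrictMono (fun n => (pellXY n).2) := by
  apply strictMono_nat_of_lt_succ
  intro n
  have := pellXY_pos n
  simp only [pellXY]
  omega

set_option maxRecDepth 4000 in
lemma no_small : ∀ b < 39, 0 < b → ∀ a ≤ 5 * b, a ^ 2 ≠ 19 * b ^ 2 + 1 := by
  decide

lemma pell_complete : ∀ b a : ℕ, a ^ 2 = 19 * b ^ 2 + 1 →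
    ∃ n, (pellXY n).1 = a ∧ (pellXY n).2 = b := by
  intro b
  induction b using Nat.strong_induction_on with
  | _ b ih =>
    intro a h
    rcases Nat.eq_zero_or_pos b with hb | hb
    · subst hb
      have : a = 1 := by nlinarith
      exact ⟨0, by simp [pellXY, this]⟩
    · have hb39 : 39 ≤ b := by
        by_contra hlt
        exact no_small b (by omega) hb a (by nlinarith) h
      have sq2 : (2 : ℕ) ≠ 0 := two_ne_zero
      have h1 : 39 * a ≤ 170 * b := by
        have hsq : (39 * a) ^ 2 ≤ (170 * b) ^ 2 := by nlinarith
        exact (pow_le_pow_iff_left₀ (Nat.zero_le _) (Nat.zero_le _) sq2).mp hsq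
      have h2 : 741 * b ≤ 170 * a := by
        have hsq : (741 * b) ^ 2 ≤ (170 * a) ^ 2 := by nlinarith
        exact (pow_le_pow_iff_left₀ (Nat.zero_le _) (Nat.zero_le _) sq2).mp hsq
      set a' := 170 * a - 741 * b with ha'
      set b' := 170 * b - 39 * a with hb'
      have hblt : b' < b := by
        have hsq : (169 * b) ^ 2 < (39 * a) ^ 2 := by nlinarith
        have : 169 * b < 39 * a :=
          (pow_lt_pow_iff_left₀ (Nat.zero_le _) (Nat.zero_le _) sq2).mp hsq
        omega
      have hsol' : a' ^ 2 = 19 * b' ^ 2 + 1 := by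
        have hz : (a' : ℤ) = 170 * a - 741 * b := by push_cast [ha', Nat.cast_sub h2]; ring
        have hz2 : (b' : ℤ) = 170 * b - 39 * a := by push_cast [hb', Nat.cast_sub h1]; ring
        have hZ : (a : ℤ) ^ 2 = 19 * (b : ℤ) ^ 2 + 1 := by exact_mod_cast h
        have : (a' : ℤ) ^ 2 = 19 * (b' : ℤ) ^ 2 + 1 := by
          rw [hz, hz2]; nlinarith [hZ]
        exact_mod_cast this
      obtain ⟨n, hxn, hyn⟩ := ih b' hblt a' hsol'
      refine ⟨n + 1, ?_, ?_⟩
      · show 170 * (pellXY n).1 + 741 * (pellXY n).2 = a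
        rw [hxn, hyn]; omega
      · show 39 * (pellXY n).1 + 170 * (pellXY n).2 = b
        rw [hxn, hyn]; omega

lemma sq_inj_aux {a b : ℕ} (h : a ^ 2 = b ^ 2) : a = b := by
  nlinarith [Nat.le_total a b]

/-- Doubling-plus-one formula. -/
lemma pellXY_double (ℓ : ℕ) :
    (pellXY (2 * ℓ + 1)).1 =
      170 * (pellXY ℓ).1 ^ 2 + 1482 * (pellXY ℓ).1 * (pellXY ℓ).2
        + 3230 * (pellXY ℓ).2 ^ 2 ∧
    (pellXY (2 * ℓ + 1)).2 =
      39 * (pellXY ℓ).1 ^ 2 + 340 * (pellXY ℓ).1 * (pellXY ℓ).2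
        + 741 * (pellXY ℓ).2 ^ 2 := by
  induction ℓ with
  | zero => simp [pellXY]
  | succ n ih =>
    obtain ⟨ih1, ih2⟩ := ih
    have e : 2 * (n + 1) + 1 = (2 * n + 1) + 1 + 1 := by ring
    rw [e]
    have step : ∀ m, (pellXY (m + 1)).1 = 170 * (pellXY m).1 + 741 * (pellXY m).2 ∧
        (pellXY (m + 1)).2 = 39 * (pellXY m).1 + 170 * (pellXY m).2 := fun m => ⟨rfl, rfl⟩
    rw [(step (2 * n + 1 + 1)).1, (step (2 * n + 1 + 1)).2, (step (2 * n + 1)).1,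
      (step (2 * n + 1)).2, ih1, ih2, (step n).1, (step n).2]
    constructor <;> ring

/-- For x² − 19y² = 1, y_{2ℓ+1} = (3x_ℓ + 13y_ℓ)(13x_ℓ + 57y_ℓ). -/
theorem stmt_2 (x y : ℕ → ℕ)
    (hsol : ∀ n, (x n) ^ 2 = 19 * (y n) ^ 2 + 1)
    (hmono : StrictMono y)
    (hall : ∀ a b : ℕ, a ^ 2 = 19 * b ^ 2 + 1 → ∃ n, x n = a ∧ y n = b)
    (ℓ : ℕ) :
    y (2 * ℓ + 1) = (3 * x ℓ + 13 * y ℓ) * (13 * x ℓ + 57 * y ℓ) := by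
  have hrange : Set.range y = Set.range (fun n => (pellXY n).2) := by
    ext b
    constructor
    · rintro ⟨n, rfl⟩
      obtain ⟨m, _, hm2⟩ := pell_complete (y n) (x n) (hsol n)
      exact ⟨m, hm2⟩
    · rintro ⟨n, rfl⟩
      obtain ⟨m, _, hm2⟩ := hall (pellXY n).1 (pellXY n).2 (pellXY_sol n)
      exact ⟨m, hm2⟩
  have hy : y = fun n => (pellXY n).2 :=
    (StrictMono.range_inj hmono pellXY_mono).mp hrange
  have hx : ∀ n, x n = (pellXY n).1 := by
    intro n
    apply sq_inj_aux
    rw [hsol n, pellXY_sol n, hy]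
  obtain ⟨_, h2⟩ := pellXY_double ℓ
  simp only [hy, hx]
  rw [h2]
  ring
end

section
/- For the Pell equation x² − 2y² = 1, the identity y_{2ℓ+1} = 2(x_ℓ + y_ℓ)(x_ℓ + 2y_ℓ) holds for every ℓ ∈ ℕ. -/
private def ab : ℕ → ℕ × ℕ
  | 0 => (1, 0)
  | n + 1 => ((ab n).1 * 3 + (ab n).2 * 4, (ab n).1 * 2 + (ab n).2 * 3)

private lemma ab_sol : ∀ n, (ab n).1 ^ 2 = 2 * (ab n).2 ^ 2 + 1 := by
  intro n
  induction n with
  | zero => rfl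
  | succ n ih =>
    show ((ab n).1 * 3 + (ab n).2 * 4) ^ 2 = 2 * ((ab n).1 * 2 + (ab n).2 * 3) ^ 2 + 1
    nlinarith [ih]

private lemma ab_fst_pos (n : ℕ) : 1 ≤ (ab n).1 := by
  nlinarith [ab_sol n]

private lemma ab_mono : StrictMono (fun n => (ab n).2) := by
  apply strictMono_nat_of_lt_succ
  intro n
  show (ab n).2 < (ab n).1 * 2 + (ab n).2 * 3
  have := ab_fst_pos n
  omega

private lemma ab_surj : ∀ v u : ℕ, u ^ 2 = 2 * v ^ 2 + 1 → ∃ n, ab n = (u, v) := by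
  intro v
  induction v using Nat.strong_induction_on with
  | _ v ih =>
    intro u hu
    rcases Nat.lt_or_ge v 2 with hv | hv
    · interval_cases v
      · have : u = 1 := by nlinarith
        exact ⟨0, by simp [this, ab]⟩
      · exfalso
        have h3 : u ^ 2 = 3 := by linarith
        have hub : u ≤ 1 := by nlinarith
        interval_cases u <;> norm_num at h3
    · -- descent
      have huv : v < u := by nlinarith
      have h2u : 2 * u ≤ 3 * v := by nlinarith
      have h4v : 4 * v ≤ 3 * u := by nlinarith
      set u' := 3 * u - 4 * v with hu'
      set v' := 3 * v - 2 * u with hv'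
      have hsol' : u' ^ 2 = 2 * v' ^ 2 + 1 := by
        have e1 : u' + 4 * v = 3 * u := by omega
        have e2 : v' + 2 * u = 3 * v := by omega
        nlinarith [e1, e2]
      have hlt : v' < v := by omega
      obtain ⟨n, hn⟩ := ih v' hlt u' hsol'
      refine ⟨n + 1, ?_⟩
      show ((ab n).1 * 3 + (ab n).2 * 4, (ab n).1 * 2 + (ab n).2 * 3) = (u, v)
      have h1 : (ab n).1 = u' := by rw [hn]
      have h2 : (ab n).2 = v' := by rw [hn]
      rw [h1, h2, Prod.mk.injEq]
      constructor <;> omega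

/-- For x² − 2y² = 1, y_{2ℓ+1} = 2(x_ℓ + y_ℓ)(x_ℓ + 2y_ℓ). -/
theorem stmt_3 (x y : ℕ → ℕ)
    (hsol : ∀ n, (x n) ^ 2 = 2 * (y n) ^ 2 + 1)
    (hmono : StrictMono y)
    (hall : ∀ a b : ℕ, a ^ 2 = 2 * b ^ 2 + 1 → ∃ n, x n = a ∧ y n = b)
    (ℓ : ℕ) :
    y (2 * ℓ + 1) = 2 * (x ℓ + y ℓ) * (x ℓ + 2 * y ℓ) := by
  have hy : y = fun n => (ab n).2 := by
    refine (hmono.range_inj ab_mono).1 ?_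
    ext v
    simp only [Set.mem_range]
    constructor
    · rintro ⟨n, rfl⟩
      obtain ⟨m, hm⟩ := ab_surj (y n) (x n) (hsol n)
      exact ⟨m, by rw [hm]⟩
    · rintro ⟨n, rfl⟩
      obtain ⟨m, hm1, hm2⟩ := hall (ab n).1 (ab n).2 (ab_sol n)
      exact ⟨m, hm2⟩
  have hx : ∀ n, x n = (ab n).1 := by
    intro n
    have h := hsol n
    rw [hy] at h
    have := ab_sol n
    nlinarith
  rw [hy, hx]
  -- now it's about ab only; prove doubling formulas
  have key : ∀ l, (ab (2 * l)).1 = (ab l).1 ^ 2 + 2 * (ab l).2 ^ 2 ∧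
      (ab (2 * l)).2 = 2 * (ab l).1 * (ab l).2 := by
    intro l
    induction l with
    | zero => exact ⟨rfl, rfl⟩
    | succ l ih =>
      obtain ⟨h1, h2⟩ := ih
      have e : 2 * (l + 1) = (2 * l + 1) + 1 := by ring
      rw [e]
      show ((ab (2*l+1)).1 * 3 + (ab (2*l+1)).2 * 4, (ab (2*l+1)).1 * 2 + (ab (2*l+1)).2 * 3).1
          = (ab (l+1)).1 ^ 2 + 2 * (ab (l+1)).2 ^ 2 ∧
        ((ab (2*l+1)).1 * 3 + (ab (2*l+1)).2 * 4, (ab (2*l+1)).1 * 2 + (ab (2*l+1)).2 * 3).2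
          = 2 * (ab (l+1)).1 * (ab (l+1)).2
      have s1 : (ab (2*l+1)).1 = (ab (2*l)).1 * 3 + (ab (2*l)).2 * 4 := rfl
      have s2 : (ab (2*l+1)).2 = (ab (2*l)).1 * 2 + (ab (2*l)).2 * 3 := rfl
      have t1 : (ab (l+1)).1 = (ab l).1 * 3 + (ab l).2 * 4 := rfl
      have t2 : (ab (l+1)).2 = (ab l).1 * 2 + (ab l).2 * 3 := rfl
      constructor <;> simp only [s1, s2, t1, t2, h1, h2] <;> ring
  obtain ⟨k1, k2⟩ := key ℓ
  show (ab (2 * ℓ)).1 * 2 + (ab (2 * ℓ)).2 * 3 = _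
  rw [k1, k2]
  ring
end

section
/- If integers r, s, v, u satisfy 171(r² + rs + 5s²)² − 169(v² + vu + 5u²)² = 2 and it is not the case that (r = 1 or r = −1) and s = 0, then setting X = (171(r² + rs + 5s²) − 169(v² + vu + 5u²))/2 and Y = ((v² + vu + 5u²) − (r² + rs + 5s²))/2, both X and Y are positive integers satisfying X² − 28899·Y² = 1. -/
theorem stmt_14 (r s v u X Y : ℤ)
    (h : 171 * (r ^ 2 + r * s + 5 * s ^ 2) ^ 2
          - 169 * (v ^ 2 + v * u + 5 * u ^ 2) ^ 2 = 2)
    (hnt : ¬ ((r = 1 ∨ r = -1) ∧ s = 0))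
    (hX : 2 * X = 171 * (r ^ 2 + r * s + 5 * s ^ 2)
          - 169 * (v ^ 2 + v * u + 5 * u ^ 2))
    (hY : 2 * Y = (v ^ 2 + v * u + 5 * u ^ 2)
          - (r ^ 2 + r * s + 5 * s ^ 2)) :
    0 < X ∧ 0 < Y ∧ X ^ 2 - 28899 * Y ^ 2 = 1 := by
  set A := r ^ 2 + r * s + 5 * s ^ 2 with hAdef
  set B := v ^ 2 + v * u + 5 * u ^ 2 with hBdef
  have hA0 : 0 ≤ A := by nlinarith [sq_nonneg (2 * r + s), sq_nonneg s]
  have hB0 : 0 ≤ B := by nlinarith [sq_nonneg (2 * v + u), sq_nonneg u]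
  have hA2 : 2 ≤ A := by
    rcases lt_or_ge A 2 with hlt | hge
    · interval_cases A
      · exfalso; nlinarith [sq_nonneg B]
      · exfalso
        have hs : s = 0 := by nlinarith [sq_nonneg (2 * r + s), sq_nonneg s, sq_nonneg (s^2 - 1)]
        have hr : r ^ 2 = 1 := by
          have := hAdef; subst hs; linarith [hAdef.symm]
        have : (r - 1) * (r + 1) = 0 := by ring_nf; linarith
        rcases mul_eq_zero.mp this with h1 | h1
        · exact hnt ⟨Or.inl (by linarith), hs⟩
        · exact hnt ⟨Or.inr (by linarith), hs⟩
    · exact hge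
  have hBA : A < B := by
    nlinarith [sq_nonneg (B - A), sq_nonneg (B + A), mul_nonneg hA0 hB0]
  have hXpos : 0 < X := by
    have h1 : 169 * B < 171 * A := by
      nlinarith [mul_nonneg hA0 hB0, sq_nonneg A]
    omega
  have hYpos : 0 < Y := by omega
  refine ⟨hXpos, hYpos, ?_⟩
  have key : 4 * (X ^ 2 - 28899 * Y ^ 2) = 4 := by nlinarith [hX, hY, h]
  linarith
end
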